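/- arXiv:1109.5204 — 4 statements merged into one kernel-verified Lean document; each statement's English description precedes it below -/
import Mathlib

section
/- If k ≤ 0, then every solution of the system with nonnegative initial data converges to the origin as t → ∞. -/
/-!
All three coordinates stay nonnegative: `x' = x (k - y)` preserves the sign of `x`, and `z`,
`y` relax towards the nonnegative quantities `x`, `z`. Then `x' ≤ 0`, so `x` decreases to a
limit `L ≥ 0`; a linear relaxation `f' = c (u - f)` with `c > 0` inherits the limit of its
forcing `u`, so `z → L` and then `y → L`. Finally `x' ≤ -x y → -L²`, so `L > 0` would drive `x`
to `-∞`.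
-/

open Filter Set Topology

section Ici

variable {f f' : ℝ → ℝ} {a : ℝ}

lemma monotoneOn_Ici_of_hasDerivAt_nonneg (hf : ∀ t ≥ a, HasDerivAt f (f' t) t)
    (hf' : ∀ t ≥ a, 0 ≤ f' t) : MonotoneOn f (Ici a) :=
  monotoneOn_of_hasDerivWithinAt_nonneg (convex_Ici a)
    (fun t ht => (hf t ht).continuousAt.continuousWithinAt)
    (fun t ht => (hf t (interior_subset ht : t ∈ Ici a)).hasDerivWithinAt)
    (fun t ht => hf' t (interior_subset ht : t ∈ Ici a))

lemma antitoneOn_Ici_of_hasDerivAt_nonpos (hf : ∀ t ≥ a, HasDerivAt f (f' t) t)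
    (hf' : ∀ t ≥ a, f' t ≤ 0) : AntitoneOn f (Ici a) :=
  antitoneOn_of_hasDerivWithinAt_nonpos (convex_Ici a)
    (fun t ht => (hf t ht).continuousAt.continuousWithinAt)
    (fun t ht => (hf t (interior_subset ht : t ∈ Ici a)).hasDerivWithinAt)
    (fun t ht => hf' t (interior_subset ht : t ∈ Ici a))

lemma AntitoneOn.exists_tendsto_atTop (hf : AntitoneOn f (Ici a)) (hbdd : BddBelow (f '' Ici a)) :
    ∃ L, Tendsto f atTop (𝓝 L) := by
  set g : ℝ → ℝ := fun t => f (max t a)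
  have hg : Antitone g := fun s t hst =>
    hf (le_max_right s a) (le_max_right t a) (max_le_max hst le_rfl)
  have hg_bdd : BddBelow (range g) :=
    hbdd.mono (range_subset_iff.2 fun t => mem_image_of_mem f (le_max_right t a))
  refine ⟨⨅ t, g t, (tendsto_atTop_ciInf hg hg_bdd).congr' ?_⟩
  filter_upwards [eventually_ge_atTop a] with t ht
  simp only [g, max_eq_left ht]

lemma tendsto_atBot_of_hasDerivAt_le_neg {δ : ℝ} (hf : ∀ t ≥ a, HasDerivAt f (f' t) t)
    (hδ : 0 < δ) (hf' : ∀ᶠ t in atTop, f' t ≤ -δ) : Tendsto f atTop atBot := by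
  obtain ⟨T₀, hT₀⟩ := eventually_atTop.1 hf'
  set T := max T₀ a
  have hanti : AntitoneOn (fun t => f t + δ * t) (Ici T) :=
    antitoneOn_Ici_of_hasDerivAt_nonpos
      (fun t ht => (hf t (le_trans (le_max_right _ _) ht)).add ((hasDerivAt_id t).const_mul δ))
      (fun t ht => by linarith [hT₀ t (le_trans (le_max_left _ _) ht), mul_one δ])
  have hline : Tendsto (fun t => f T + δ * T + -(δ * t)) atTop atBot :=
    tendsto_atBot_add_const_left _ _
      (tendsto_neg_atTop_atBot.comp (tendsto_id.const_mul_atTop hδ))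
  refine tendsto_atBot_mono' _ ?_ hline
  filter_upwards [eventually_ge_atTop T] with t ht
  have := hanti self_mem_Ici ht ht
  simp only at this
  linarith

end Ici

/-- The integrating factor `exp (-∫ₐᵗ b)` turns `f' = f b` into a constant. -/
lemma nonneg_of_hasDerivAt_mul {f b : ℝ → ℝ} {a : ℝ} (hb : ContinuousOn b (Ici a))
    (hf : ∀ t ≥ a, HasDerivAt f (f t * b t) t) (ha : 0 ≤ f a) : ∀ t ≥ a, 0 ≤ f t := by
  set b' : ℝ → ℝ := fun t => b (max t a)
  have hb' : Continuous b' :=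
    hb.comp_continuous (continuous_id.max continuous_const) fun t => le_max_right t a
  set B : ℝ → ℝ := fun t => ∫ s in a..t, b' s
  have hg : ∀ t ≥ a, HasDerivAt (fun s => f s * Real.exp (-B s)) 0 t := fun t ht => by
    have hB : HasDerivAt B (b t) t := by
      simpa [b', max_eq_left ht] using (hb'.integral_hasStrictDerivAt a t).hasDerivAt
    exact ((hf t ht).mul hB.neg.exp).congr_deriv (by ring)
  have hmono := monotoneOn_Ici_of_hasDerivAt_nonneg hg fun _ _ => le_rfl
  intro t ht
  have := hmono self_mem_Ici ht ht
  simp only [B, intervalIntegral.integral_same, neg_zero, Real.exp_zero, mul_one] at this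
  exact (mul_nonneg_iff_of_pos_right (Real.exp_pos _)).1 (ha.trans this)

section Relaxation

variable {c : ℝ} {u f : ℝ → ℝ} {a : ℝ}

lemma hasDerivAt_exp_mul_mul_sub {t : ℝ} (M : ℝ) (hf : HasDerivAt f (c * (u t - f t)) t) :
    HasDerivAt (fun s => Real.exp (c * s) * (f s - M)) (Real.exp (c * t) * c * (u t - M)) t :=
  ((((hasDerivAt_id t).const_mul c).exp).mul (hf.sub_const M)).congr_deriv
    (by simp only [id]; ring)

lemma nonneg_of_hasDerivAt_mul_sub (hc : 0 ≤ c) (hf : ∀ t ≥ a, HasDerivAt f (c * (u t - f t)) t)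
    (hu : ∀ t ≥ a, 0 ≤ u t) (ha : 0 ≤ f a) : ∀ t ≥ a, 0 ≤ f t := by
  have hmono := monotoneOn_Ici_of_hasDerivAt_nonneg
    (fun t ht => hasDerivAt_exp_mul_mul_sub 0 (hf t ht)) fun t ht => by
      simpa only [sub_zero] using mul_nonneg (mul_nonneg (Real.exp_pos _).le hc) (hu t ht)
  intro t ht
  have := hmono self_mem_Ici ht ht
  simp only [sub_zero] at this
  exact (mul_nonneg_iff_of_pos_left (Real.exp_pos _)).1
    ((mul_nonneg (Real.exp_pos _).le ha).trans this)

/-- Once `u ≤ M`, the gap `f - M` is at most a multiple of `exp (-c t)`. -/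
lemma eventually_lt_of_hasDerivAt_mul_sub {M b : ℝ} (hc : 0 < c)
    (hf : ∀ t ≥ a, HasDerivAt f (c * (u t - f t)) t) (hu : ∀ᶠ t in atTop, u t ≤ M)
    (hMb : M < b) :
    ∀ᶠ t in atTop, f t < b := by
  obtain ⟨T₀, hT₀⟩ := eventually_atTop.1 hu
  set T := max T₀ a
  set g : ℝ → ℝ := fun s => Real.exp (c * s) * (f s - M)
  have hanti : AntitoneOn g (Ici T) :=
    antitoneOn_Ici_of_hasDerivAt_nonpos
      (fun t ht => hasDerivAt_exp_mul_mul_sub M (hf t (le_trans (le_max_right _ _) ht)))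
      fun t ht => mul_nonpos_of_nonneg_of_nonpos (mul_pos (Real.exp_pos _) hc).le
        (sub_nonpos.2 (hT₀ t (le_trans (le_max_left _ _) ht)))
  have hdecay : Tendsto (fun t => Real.exp (-(c * t)) * g T) atTop (𝓝 0) := by
    simpa using (Real.tendsto_exp_neg_atTop_nhds_zero.comp
      (tendsto_id.const_mul_atTop hc)).mul_const (g T)
  filter_upwards [eventually_ge_atTop T, hdecay.eventually (gt_mem_nhds (sub_pos.2 hMb))]
    with t ht hsmall
  have hgap : f t - M = Real.exp (-(c * t)) * g t := by
    simp only [g, ← mul_assoc, ← Real.exp_add, neg_add_cancel, Real.exp_zero, one_mul]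
  have := mul_le_mul_of_nonneg_left (hanti self_mem_Ici ht ht) (Real.exp_pos (-(c * t))).le
  linarith

lemma tendsto_of_hasDerivAt_mul_sub {L : ℝ} (hc : 0 < c)
    (hf : ∀ t ≥ a, HasDerivAt f (c * (u t - f t)) t) (hu : Tendsto u atTop (𝓝 L)) :
    Tendsto f atTop (𝓝 L) := by
  refine tendsto_order.2 ⟨fun b hb => ?_, fun b hb => ?_⟩
  · obtain ⟨M, hbM, hML⟩ := exists_between hb
    have hneg := eventually_lt_of_hasDerivAt_mul_sub (u := -u) (f := -f) (M := -M) hc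
      (fun t ht => (hf t ht).neg.congr_deriv (by simp only [Pi.neg_apply]; ring))
      ((tendsto_order.1 hu).1 M hML |>.mono fun t ht => neg_le_neg ht.le) (neg_lt_neg hbM)
    exact hneg.mono fun t ht => neg_lt_neg_iff.1 ht
  · obtain ⟨M, hLM, hMb⟩ := exists_between hb
    exact eventually_lt_of_hasDerivAt_mul_sub hc hf
      ((tendsto_order.1 hu).2 M hLM |>.mono fun t ht => ht.le) hMb

end Relaxation

/-- If `k ≤ 0`, every solution with nonnegative initial data converges to the origin. -/
theorem stmt_9 (k k₃ k₅ : ℝ) (hk : k ≤ 0) (hk₃ : 0 < k₃) (hk₅ : 0 < k₅)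
    (x y z : ℝ → ℝ)
    (hx : ∀ t ≥ (0 : ℝ), HasDerivAt x (k * x t - x t * y t) t)
    (hy : ∀ t ≥ (0 : ℝ), HasDerivAt y (k₃ * (z t - y t)) t)
    (hz : ∀ t ≥ (0 : ℝ), HasDerivAt z (k₅ * (x t - z t)) t)
    (hx0 : 0 ≤ x 0) (hy0 : 0 ≤ y 0) (hz0 : 0 ≤ z 0) :
    Tendsto (fun t => (x t, y t, z t)) atTop (nhds ((0 : ℝ), (0 : ℝ), (0 : ℝ))) := by
  have hx_nonneg : ∀ t ≥ (0 : ℝ), 0 ≤ x t :=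
    nonneg_of_hasDerivAt_mul (b := fun t => k - y t)
      (fun t ht => (continuousAt_const.sub (hy t ht).continuousAt).continuousWithinAt)
      (fun t ht => (hx t ht).congr_deriv (by ring)) hx0
  have hz_nonneg := nonneg_of_hasDerivAt_mul_sub hk₅.le hz hx_nonneg hz0
  have hy_nonneg := nonneg_of_hasDerivAt_mul_sub hk₃.le hy hz_nonneg hy0
  have hx_anti : AntitoneOn x (Ici 0) := antitoneOn_Ici_of_hasDerivAt_nonpos hx fun t ht => by
    nlinarith [hx_nonneg t ht, hy_nonneg t ht]
  obtain ⟨L, hxL⟩ :=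
    hx_anti.exists_tendsto_atTop ⟨0, by rintro _ ⟨t, ht, rfl⟩; exact hx_nonneg t ht⟩
  have hzL := tendsto_of_hasDerivAt_mul_sub hk₅ hz hxL
  have hyL := tendsto_of_hasDerivAt_mul_sub hk₃ hy hzL
  obtain rfl : L = 0 := by
    by_contra hL
    have hLL : 0 < L * L := mul_self_pos.2 hL
    have hx' : ∀ᶠ t in atTop, k * x t - x t * y t ≤ -(L * L / 2) := by
      filter_upwards [(hxL.mul hyL).eventually (lt_mem_nhds (half_lt_self hLL)),
        eventually_ge_atTop 0] with t hxy ht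
      nlinarith [hx_nonneg t ht]
    exact not_tendsto_nhds_of_tendsto_atBot
      (tendsto_atBot_of_hasDerivAt_le_neg hx (half_pos hLL) hx') L hxL
  exact hxL.prodMk_nhds (hyL.prodMk_nhds hzL)
end

section
/- Along any solution with x(t) > 0 for all t ≥ 0, the ratio w = z/x satisfies the differential inequality w' ≥ k₅ - (k + k₅) w, and consequently liminf_{t→∞} z(t)/x(t) ≥ k₅/(k + k₅) when k > 0. -/
open Filter Real Set

/-!
Multiplying by the integrating factor `exp (a t)` turns `w' ≥ b - a w` into the monotonicity of
`exp (a t) (w t - b/a)`, so `w t ≥ b/a + (w 0 - b/a) exp (-a t)`, and the exponential term dies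
out when `a > 0`. For `w = z/x` the quotient rule gives `w' = k₅ - (k + k₅) w + y w`, and
`y w ≥ 0` in the nonnegative octant.
-/

section LinearDifferentialInequality

variable {a b : ℝ} {w w' : ℝ → ℝ}

theorem monotoneOn_exp_mul_sub_of_deriv_ge (ha : a ≠ 0)
    (hw : ∀ t ≥ (0 : ℝ), HasDerivAt w (w' t) t) (hineq : ∀ t ≥ (0 : ℝ), b - a * w t ≤ w' t) :
    MonotoneOn (fun t => exp (a * t) * (w t - b / a)) (Ici 0) := by
  have hv : ∀ t ≥ (0 : ℝ), HasDerivAt (fun s => exp (a * s) * (w s - b / a))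
      (exp (a * t) * (w' t - (b - a * w t))) t := by
    intro t ht
    have hexp : HasDerivAt (fun s => exp (a * s)) (exp (a * t) * a) t := by
      simpa [mul_comm] using ((hasDerivAt_id t).const_mul a).exp
    refine (hexp.mul ((hw t ht).sub_const (b / a))).congr_deriv ?_
    field_simp
    ring
  refine monotoneOn_of_hasDerivWithinAt_nonneg (convex_Ici 0)
    (fun t ht => (hv t ht).continuousAt.continuousWithinAt)
    (fun t ht => (hv t (interior_subset ht)).hasDerivWithinAt) fun t ht => ?_
  have ht : (0 : ℝ) ≤ t := interior_subset ht
  exact mul_nonneg (exp_pos _).le (sub_nonneg.mpr (hineq t ht))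

theorem le_of_deriv_ge_linear (ha : a ≠ 0)
    (hw : ∀ t ≥ (0 : ℝ), HasDerivAt w (w' t) t) (hineq : ∀ t ≥ (0 : ℝ), b - a * w t ≤ w' t)
    {t : ℝ} (ht : 0 ≤ t) :
    b / a + (w 0 - b / a) * exp (-(a * t)) ≤ w t := by
  have hmono := monotoneOn_exp_mul_sub_of_deriv_ge ha hw hineq self_mem_Ici ht ht
  simp only [mul_zero, exp_zero, one_mul] at hmono
  have : (w 0 - b / a) * exp (-(a * t)) ≤ w t - b / a := by
    rw [exp_neg, ← div_eq_mul_inv, div_le_iff₀ (exp_pos _)]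
    linarith
  linarith

theorem eventually_le_of_deriv_ge_linear (ha : 0 < a)
    (hw : ∀ t ≥ (0 : ℝ), HasDerivAt w (w' t) t) (hineq : ∀ t ≥ (0 : ℝ), b - a * w t ≤ w' t)
    {c : ℝ} (hc : c < b / a) :
    ∀ᶠ t in atTop, c ≤ w t := by
  have hdecay : Tendsto (fun t => b / a + (w 0 - b / a) * exp (-(a * t))) atTop (nhds (b / a)) := by
    have := (tendsto_exp_neg_atTop_nhds_zero.comp
      (tendsto_id.const_mul_atTop ha)).const_mul (w 0 - b / a) |>.const_add (b / a)
    simpa using this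
  filter_upwards [hdecay.eventually_const_le hc, eventually_ge_atTop 0] with t hct ht
  exact hct.trans (le_of_deriv_ge_linear ha.ne' hw hineq ht)

end LinearDifferentialInequality

theorem hasDerivAt_div_of_ode {k k₅ : ℝ} {x y z : ℝ → ℝ} {t : ℝ}
    (hx : HasDerivAt x (k * x t - x t * y t) t) (hz : HasDerivAt z (k₅ * (x t - z t)) t)
    (hxt : x t ≠ 0) :
    HasDerivAt (fun s => z s / x s) (k₅ - (k + k₅) * (z t / x t) + y t * (z t / x t)) t := by
  refine (hz.div hx hxt).congr_deriv ?_
  field_simp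
  ring

theorem stmt_10_general (k k₅ : ℝ) (hk : 0 < k) (hk₅ : 0 < k₅)
    (x y z : ℝ → ℝ)
    (hx : ∀ t ≥ (0 : ℝ), HasDerivAt x (k * x t - x t * y t) t)
    (hz : ∀ t ≥ (0 : ℝ), HasDerivAt z (k₅ * (x t - z t)) t)
    (hxpos : ∀ t ≥ (0 : ℝ), 0 < x t)
    (hypos : ∀ t ≥ (0 : ℝ), 0 ≤ y t) (hzpos : ∀ t ≥ (0 : ℝ), 0 ≤ z t) :
    (∀ t ≥ (0 : ℝ), ∃ w' : ℝ, HasDerivAt (fun s => z s / x s) w' t ∧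
        k₅ - (k + k₅) * (z t / x t) ≤ w') ∧
    (∀ c < k₅ / (k + k₅), ∀ᶠ t in atTop, c ≤ z t / x t) := by
  have hderiv : ∀ t ≥ (0 : ℝ), HasDerivAt (fun s => z s / x s)
      (k₅ - (k + k₅) * (z t / x t) + y t * (z t / x t)) t := fun t ht =>
    hasDerivAt_div_of_ode (hx t ht) (hz t ht) (hxpos t ht).ne'
  have hineq : ∀ t ≥ (0 : ℝ),
      k₅ - (k + k₅) * (z t / x t) ≤ k₅ - (k + k₅) * (z t / x t) + y t * (z t / x t) :=
    fun t ht => le_add_of_nonneg_right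
      (mul_nonneg (hypos t ht) (div_nonneg (hzpos t ht) (hxpos t ht).le))
  exact ⟨fun t ht => ⟨_, hderiv t ht, hineq t ht⟩,
    fun c hc => eventually_le_of_deriv_ge_linear (by positivity) hderiv hineq hc⟩

/-- Along a solution staying in the nonnegative octant with `x > 0`, the ratio `w = z/x`
satisfies `w' ≥ k₅ - (k+k₅) w`, and consequently `liminf_{t→∞} z/x ≥ k₅/(k+k₅)`
(stated in the robust form: every `c < k₅/(k+k₅)` is eventually a lower bound). -/
theorem stmt_10 (k k₃ k₅ : ℝ) (hk : 0 < k) (hk₃ : 0 < k₃) (hk₅ : 0 < k₅)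
    (x y z : ℝ → ℝ)
    (hx : ∀ t ≥ (0 : ℝ), HasDerivAt x (k * x t - x t * y t) t)
    (hy : ∀ t ≥ (0 : ℝ), HasDerivAt y (k₃ * (z t - y t)) t)
    (hz : ∀ t ≥ (0 : ℝ), HasDerivAt z (k₅ * (x t - z t)) t)
    (hxpos : ∀ t ≥ (0 : ℝ), 0 < x t)
    (hypos : ∀ t ≥ (0 : ℝ), 0 ≤ y t) (hzpos : ∀ t ≥ (0 : ℝ), 0 ≤ z t) :
    (∀ t ≥ (0 : ℝ), ∃ w' : ℝ, HasDerivAt (fun s => z s / x s) w' t ∧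
        k₅ - (k + k₅) * (z t / x t) ≤ w') ∧
    (∀ c < k₅ / (k + k₅), ∀ᶠ t in atTop, c ≤ z t / x t) :=
  stmt_10_general k k₅ hk hk₅ x y z hx hz hxpos hypos hzpos
end

section
/- Let k, k₃, k₅ > 0, let 0 < σ ≤ k₅/(k+k₅), 0 < ρ ≤ k₃σ/(k+k₃), and K ≥ k/ρ. Then the set B = {(x,y,z) ∈ [0,K]³ : x = 0, or (z ≥ σx and y ≥ ρx)} is positively invariant for the system x' = kx - xy, y' = k₃(z - y), z' = k₅(x - z). -/
/-!
Each of the quantities `x`, `z`, `y`, `z - σx`, `y - ρx`, `K - x`, `K - z`, `K - y` satisfies a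
linear differential inequality `u' ≥ a(t) u` along solutions, as soon as the ones before it in
this list are known to be nonnegative:
`x' = (k - y) x`, `z' ≥ -k₅ z`, `y' ≥ -k₃ y`, `(z - σx)' ≥ -k₅ (z - σx)`,
`(y - ρx)' ≥ -k₃ (y - ρx)`, `(K - x)' ≥ -ρx (K - x)`, `(K - z)' ≥ -k₅ (K - z)` and
`(K - y)' ≥ -k₃ (K - y)`; the conditions on `σ`, `ρ` and `K` are what make the middle three hold.
The integrating factor `exp (-∫ a)` makes `u` times it monotone, so `u(0) ≥ 0` propagates to
`u(t) ≥ 0`. Inside `[0,K]³`, `x = 0` already gives `z ≥ σx` and `y ≥ ρx`, so `B` is exactly the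
set where all eight quantities are nonnegative.
-/

open Set

theorem nonneg_of_hasDerivAt_ge_mul {u u' a : ℝ → ℝ} {t₀ : ℝ} (ha : ContinuousOn a (Ici t₀))
    (hu : ∀ t ≥ t₀, HasDerivAt u (u' t) t) (hle : ∀ t ≥ t₀, a t * u t ≤ u' t)
    (h₀ : 0 ≤ u t₀) : ∀ t ≥ t₀, 0 ≤ u t := by
  have ha' : Continuous fun s => a (max s t₀) :=
    ha.comp_continuous (continuous_id.max continuous_const) fun s => le_max_right s t₀
  set A : ℝ → ℝ := fun t => ∫ s in t₀..t, a (max s t₀)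
  have hA : ∀ t ≥ t₀, HasDerivAt A (a t) t := fun t ht => by
    simpa [max_eq_left ht] using (ha'.integral_hasStrictDerivAt t₀ t).hasDerivAt
  have hg : ∀ t ≥ t₀, HasDerivAt (fun t => u t * Real.exp (-A t))
      ((u' t - a t * u t) * Real.exp (-A t)) t := fun t ht =>
    ((hu t ht).mul (hA t ht).neg.exp).congr_deriv (by simp only [Pi.neg_apply]; ring)
  have hmono : MonotoneOn (fun t => u t * Real.exp (-A t)) (Ici t₀) :=
    monotoneOn_of_hasDerivWithinAt_nonneg (convex_Ici t₀) (HasDerivAt.continuousOn hg)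
      (fun t ht => (hg t (interior_subset ht)).hasDerivWithinAt)
      (fun t ht => mul_nonneg (sub_nonneg.2 (hle t (interior_subset ht))) (Real.exp_pos _).le)
  intro t ht
  have := hmono self_mem_Ici ht ht
  exact nonneg_of_mul_nonneg_left ((mul_nonneg h₀ (Real.exp_pos _).le).trans this)
    (Real.exp_pos _)

namespace DelayedFeedback

variable {k k₃ k₅ : ℝ} {x y z : ℝ → ℝ}

theorem nonneg (hk₃ : 0 ≤ k₃) (hk₅ : 0 ≤ k₅)
    (hx : ∀ t ≥ (0 : ℝ), HasDerivAt x (k * x t - x t * y t) t)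
    (hy : ∀ t ≥ (0 : ℝ), HasDerivAt y (k₃ * (z t - y t)) t)
    (hz : ∀ t ≥ (0 : ℝ), HasDerivAt z (k₅ * (x t - z t)) t)
    (hx₀ : 0 ≤ x 0) (hy₀ : 0 ≤ y 0) (hz₀ : 0 ≤ z 0) :
    ∀ t ≥ (0 : ℝ), 0 ≤ x t ∧ 0 ≤ y t ∧ 0 ≤ z t := by
  have x_nonneg : ∀ t ≥ 0, 0 ≤ x t :=
    nonneg_of_hasDerivAt_ge_mul (continuousOn_const.sub (HasDerivAt.continuousOn hy)) hx
      (fun t _ => (by ring : (k - y t) * x t = _).le) hx₀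
  have z_nonneg : ∀ t ≥ 0, 0 ≤ z t := by
    refine nonneg_of_hasDerivAt_ge_mul (a := fun _ => -k₅) continuousOn_const hz
      (fun t ht => ?_) hz₀
    nlinarith [mul_nonneg hk₅ (x_nonneg t ht)]
  have y_nonneg : ∀ t ≥ 0, 0 ≤ y t := by
    refine nonneg_of_hasDerivAt_ge_mul (a := fun _ => -k₃) continuousOn_const hy
      (fun t ht => ?_) hy₀
    nlinarith [mul_nonneg hk₃ (z_nonneg t ht)]
  exact fun t ht => ⟨x_nonneg t ht, y_nonneg t ht, z_nonneg t ht⟩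

theorem ratio_bounds {σ ρ : ℝ} (hk₃ : 0 ≤ k₃) (hσ : 0 ≤ σ) (hσk : σ * (k + k₅) ≤ k₅)
    (hρ : 0 ≤ ρ) (hρk : ρ * (k + k₃) ≤ k₃ * σ)
    (hx : ∀ t ≥ (0 : ℝ), HasDerivAt x (k * x t - x t * y t) t)
    (hy : ∀ t ≥ (0 : ℝ), HasDerivAt y (k₃ * (z t - y t)) t)
    (hz : ∀ t ≥ (0 : ℝ), HasDerivAt z (k₅ * (x t - z t)) t)
    (x_nonneg : ∀ t ≥ (0 : ℝ), 0 ≤ x t) (y_nonneg : ∀ t ≥ (0 : ℝ), 0 ≤ y t)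
    (hz₀ : σ * x 0 ≤ z 0) (hy₀ : ρ * x 0 ≤ y 0) :
    ∀ t ≥ (0 : ℝ), σ * x t ≤ z t ∧ ρ * x t ≤ y t := by
  have z_ge : ∀ t ≥ 0, 0 ≤ z t - σ * x t := by
    refine nonneg_of_hasDerivAt_ge_mul (a := fun _ => -k₅) continuousOn_const
      (fun t ht => (hz t ht).sub ((hx t ht).const_mul σ)) (fun t ht => ?_) (by linarith)
    have hxt := x_nonneg t ht
    nlinarith [mul_nonneg hxt (sub_nonneg.2 hσk), mul_nonneg (mul_nonneg hσ hxt) (y_nonneg t ht)]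
  have y_ge : ∀ t ≥ 0, 0 ≤ y t - ρ * x t := by
    refine nonneg_of_hasDerivAt_ge_mul (a := fun _ => -k₃) continuousOn_const
      (fun t ht => (hy t ht).sub ((hx t ht).const_mul ρ)) (fun t ht => ?_) (by linarith)
    have hxt := x_nonneg t ht
    nlinarith [mul_nonneg hxt (sub_nonneg.2 hρk), mul_nonneg (mul_nonneg hρ hxt) (y_nonneg t ht),
      mul_nonneg hk₃ (z_ge t ht)]
  exact fun t ht => ⟨sub_nonneg.1 (z_ge t ht), sub_nonneg.1 (y_ge t ht)⟩

theorem le_bound {ρ K : ℝ} (hk₃ : 0 ≤ k₃) (hk₅ : 0 ≤ k₅) (hK : k ≤ ρ * K)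
    (hx : ∀ t ≥ (0 : ℝ), HasDerivAt x (k * x t - x t * y t) t)
    (hy : ∀ t ≥ (0 : ℝ), HasDerivAt y (k₃ * (z t - y t)) t)
    (hz : ∀ t ≥ (0 : ℝ), HasDerivAt z (k₅ * (x t - z t)) t)
    (x_nonneg : ∀ t ≥ (0 : ℝ), 0 ≤ x t) (y_ge : ∀ t ≥ (0 : ℝ), ρ * x t ≤ y t)
    (hx₀ : x 0 ≤ K) (hy₀ : y 0 ≤ K) (hz₀ : z 0 ≤ K) :
    ∀ t ≥ (0 : ℝ), x t ≤ K ∧ y t ≤ K ∧ z t ≤ K := by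
  have x_le : ∀ t ≥ 0, 0 ≤ K - x t := by
    refine nonneg_of_hasDerivAt_ge_mul (a := fun t => -(ρ * x t))
      (continuousOn_const.mul (HasDerivAt.continuousOn hx)).neg
      (fun t ht => (hx t ht).const_sub K) (fun t ht => ?_) (by linarith)
    have hxt := x_nonneg t ht
    nlinarith [mul_nonneg hxt (sub_nonneg.2 (y_ge t ht)), mul_nonneg hxt (sub_nonneg.2 hK)]
  have z_le : ∀ t ≥ 0, 0 ≤ K - z t := by
    refine nonneg_of_hasDerivAt_ge_mul (a := fun _ => -k₅) continuousOn_const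
      (fun t ht => (hz t ht).const_sub K) (fun t ht => ?_) (by linarith)
    nlinarith [mul_nonneg hk₅ (x_le t ht)]
  have y_le : ∀ t ≥ 0, 0 ≤ K - y t := by
    refine nonneg_of_hasDerivAt_ge_mul (a := fun _ => -k₃) continuousOn_const
      (fun t ht => (hy t ht).const_sub K) (fun t ht => ?_) (by linarith)
    nlinarith [mul_nonneg hk₃ (z_le t ht)]
  exact fun t ht => ⟨sub_nonneg.1 (x_le t ht), sub_nonneg.1 (y_le t ht), sub_nonneg.1 (z_le t ht)⟩

end DelayedFeedback

/-- The set `B = {(x,y,z) ∈ [0,K]³ : x = 0 ∨ (z ≥ σx ∧ y ≥ ρx)}` is positively invariant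
for the system, when `0 < σ ≤ k₅/(k+k₅)`, `0 < ρ ≤ k₃σ/(k+k₃)` and `K ≥ k/ρ`. -/
theorem stmt_12 (k k₃ k₅ σ ρ K : ℝ) (hk : 0 < k) (hk₃ : 0 < k₃) (hk₅ : 0 < k₅)
    (hσ : 0 < σ) (hσ' : σ ≤ k₅ / (k + k₅))
    (hρ : 0 < ρ) (hρ' : ρ ≤ k₃ * σ / (k + k₃)) (hK : k / ρ ≤ K)
    (x y z : ℝ → ℝ)
    (hx : ∀ t ≥ (0 : ℝ), HasDerivAt x (k * x t - x t * y t) t)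
    (hy : ∀ t ≥ (0 : ℝ), HasDerivAt y (k₃ * (z t - y t)) t)
    (hz : ∀ t ≥ (0 : ℝ), HasDerivAt z (k₅ * (x t - z t)) t)
    (h0 : (x 0, y 0, z 0) ∈ {p : ℝ × ℝ × ℝ |
        p.1 ∈ Set.Icc 0 K ∧ p.2.1 ∈ Set.Icc 0 K ∧ p.2.2 ∈ Set.Icc 0 K ∧
        (p.1 = 0 ∨ (σ * p.1 ≤ p.2.2 ∧ ρ * p.1 ≤ p.2.1))}) :
    ∀ t ≥ (0 : ℝ), (x t, y t, z t) ∈ {p : ℝ × ℝ × ℝ |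
        p.1 ∈ Set.Icc 0 K ∧ p.2.1 ∈ Set.Icc 0 K ∧ p.2.2 ∈ Set.Icc 0 K ∧
        (p.1 = 0 ∨ (σ * p.1 ≤ p.2.2 ∧ ρ * p.1 ≤ p.2.1))} := by
  simp only [mem_ofPred_eq, mem_Icc] at h0 ⊢
  obtain ⟨⟨hx₀, hxK₀⟩, ⟨hy₀, hyK₀⟩, ⟨hz₀, hzK₀⟩, hB₀⟩ := h0
  have hratio₀ : σ * x 0 ≤ z 0 ∧ ρ * x 0 ≤ y 0 := hB₀.elim (fun h => by simp [h, hy₀, hz₀]) id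
  have hσk : σ * (k + k₅) ≤ k₅ := (le_div_iff₀ (by positivity)).1 hσ'
  have hρk : ρ * (k + k₃) ≤ k₃ * σ := (le_div_iff₀ (by positivity)).1 hρ'
  have hKρ : k ≤ ρ * K := by rw [mul_comm]; exact (div_le_iff₀ hρ).1 hK
  have hnonneg := DelayedFeedback.nonneg hk₃.le hk₅.le hx hy hz hx₀ hy₀ hz₀
  have hratio := DelayedFeedback.ratio_bounds hk₃.le hσ.le hσk hρ.le hρk hx hy hz
    (fun t ht => (hnonneg t ht).1) (fun t ht => (hnonneg t ht).2.1) hratio₀.1 hratio₀.2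
  have hle := DelayedFeedback.le_bound hk₃.le hk₅.le hKρ hx hy hz
    (fun t ht => (hnonneg t ht).1) (fun t ht => (hratio t ht).2) hxK₀ hyK₀ hzK₀
  intro t ht
  obtain ⟨hxt, hyt, hzt⟩ := hnonneg t ht
  obtain ⟨hxK, hyK, hzK⟩ := hle t ht
  exact ⟨⟨hxt, hxK⟩, ⟨hyt, hyK⟩, ⟨hzt, hzK⟩, Or.inr (hratio t ht)⟩
end

section
/- If k > 0, every solution with nonnegative initial data and x(0) > 0 satisfies limsup_{t→∞} x(t) ≤ M, limsup_{t→∞} z(t) ≤ M, and limsup_{t→∞} y(t) ≤ M, where M = k(k+k₅)(k+k₃)/(k₃k₅). -/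
/-!
Along a solution, `x` stays positive and `y`, `z` stay nonnegative. The ratio `w = z/x` satisfies
`w' = (k + k₅)(k₅/(k + k₅) - w) + zy/x`, so comparison with the linear relaxation gives
`liminf w ≥ k₅/(k + k₅)`. Likewise `v = y/x` satisfies `v' = (k + k₃)(k₃ w/(k + k₃) - v) + y²/x`,
giving `liminf v ≥ m := k₃k₅/((k + k₃)(k + k₅))`. Finally `u = 1/x` satisfies `u' = k(v/k - u)`
(the Bernoulli form of the logistic comparison `x' ≤ x(k - m x)`), so `liminf 1/x ≥ m/k = 1/M`,
i.e. `limsup x ≤ M`. The relaxation equations `z' = k₅(x - z)` and `y' = k₃(z - y)` pass this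
bound on to `z` and then to `y`.
-/

open Filter Set Real Topology

/-- `liminf_{t → ∞} f t ≥ L`, stated without any boundedness assumption on `f`. -/
def LiminfAtTopGE (f : ℝ → ℝ) (L : ℝ) : Prop :=
  ∀ L' < L, ∀ᶠ t in atTop, L' < f t

/-- `limsup_{t → ∞} f t ≤ L`, stated without any boundedness assumption on `f`. -/
def LimsupAtTopLE (f : ℝ → ℝ) (L : ℝ) : Prop :=
  ∀ L' > L, ∀ᶠ t in atTop, f t < L'

theorem LimsupAtTopLE.limsup_le {f : ℝ → ℝ} {L m : ℝ} (hf : LimsupAtTopLE f L)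
    (hm : ∀ᶠ t in atTop, m ≤ f t) : limsup f atTop ≤ L := by
  have hbdd : ∀ᶠ t in atTop, f t ≤ L + 1 := (hf _ (lt_add_one L)).mono fun _ ↦ le_of_lt
  exact (limsup_le_iff (isCoboundedUnder_le_of_eventually_le atTop hm)
    (isBoundedUnder_of_eventually_le hbdd)).2 hf

theorem LiminfAtTopGE.limsupAtTopLE_inv {f : ℝ → ℝ} {L : ℝ} (hf : LiminfAtTopGE (fun t ↦ (f t)⁻¹) L)
    (hL : 0 < L) (hpos : ∀ᶠ t in atTop, 0 < f t) : LimsupAtTopLE f L⁻¹ := by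
  intro L' hL'
  have hL'pos : 0 < L' := (inv_pos.2 hL).trans hL'
  filter_upwards [hf L'⁻¹ (inv_lt_of_inv_lt₀ hL hL'), hpos] with t ht hft
  exact (inv_lt_inv₀ hL'pos hft).1 ht

section Comparison

variable {u u' : ℝ → ℝ} {b L T : ℝ}

/-- The multiplier `exp (b (t - T))` turns `u' ≥ b (L - u)` into monotonicity of
`(u - L) exp (b (t - T))`. -/
theorem add_mul_exp_le_of_linear_le_deriv (hu : ∀ t ≥ T, HasDerivAt u (u' t) t)
    (hle : ∀ t ≥ T, b * (L - u t) ≤ u' t) {t : ℝ} (ht : T ≤ t) :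
    L + (u T - L) * exp (-(b * (t - T))) ≤ u t := by
  set g : ℝ → ℝ := fun s ↦ (u s - L) * exp (b * (s - T))
  have hg : ∀ s ≥ T, HasDerivAt g ((u' s + b * (u s - L)) * exp (b * (s - T))) s := by
    intro s hs
    have hexp : HasDerivAt (fun s ↦ exp (b * (s - T))) (exp (b * (s - T)) * b) s := by
      simpa using (((hasDerivAt_id s).sub_const T).const_mul b).exp
    exact (((hu s hs).sub_const L).mul hexp).congr_deriv (by ring)
  have hmono : MonotoneOn g (Ici T) := by
    refine monotoneOn_of_hasDerivWithinAt_nonneg (convex_Ici T)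
      (f' := fun s ↦ (u' s + b * (u s - L)) * exp (b * (s - T)))
      (fun s hs ↦ (hg s hs).continuousAt.continuousWithinAt) (fun s hs ↦ ?_) (fun s hs ↦ ?_)
    · rw [interior_Ici] at hs
      exact (hg s (le_of_lt hs)).hasDerivWithinAt
    · rw [interior_Ici] at hs
      have := hle s (le_of_lt hs)
      exact mul_nonneg (by linarith) (exp_pos _).le
  have hgT : u T - L ≤ (u t - L) * exp (b * (t - T)) := by
    simpa [g] using hmono self_mem_Ici ht ht
  have key : (u T - L) * exp (-(b * (t - T))) ≤ u t - L := by
    rw [exp_neg, ← div_eq_mul_inv, div_le_iff₀ (exp_pos _)]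
    exact hgT
  linarith

theorem nonneg_of_hasDerivAt_relax {g : ℝ → ℝ} (hb : 0 ≤ b)
    (hu : ∀ t ≥ T, HasDerivAt u (b * (g t - u t)) t) (hg : ∀ t ≥ T, 0 ≤ g t) (hT : 0 ≤ u T) :
    ∀ t ≥ T, 0 ≤ u t := by
  intro t ht
  have hle : ∀ s ≥ T, b * (0 - u s) ≤ b * (g s - u s) := fun s hs ↦
    mul_le_mul_of_nonneg_left (by linarith [hg s hs]) hb
  have := add_mul_exp_le_of_linear_le_deriv hu hle ht
  nlinarith [exp_pos (-(b * (t - T)))]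

theorem liminfAtTopGE_of_linear_le_deriv (hb : 0 < b)
    (hu : ∀ᶠ t in atTop, HasDerivAt u (u' t) t)
    (hle : ∀ L' < L, ∀ᶠ t in atTop, b * (L' - u t) ≤ u' t) : LiminfAtTopGE u L := by
  intro L' hL'
  obtain ⟨L₁, hL'₁, hL₁⟩ := exists_between hL'
  obtain ⟨T, hT⟩ := eventually_atTop.1 (hu.and (hle L₁ hL₁))
  have hdecay : Tendsto (fun t ↦ (u T - L₁) * exp (-(b * (t - T)))) atTop (𝓝 0) := by
    have hlin : Tendsto (fun t ↦ -(b * (t - T))) atTop atBot :=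
      tendsto_neg_atTop_atBot.comp
        ((tendsto_atTop_add_const_right atTop (-T) tendsto_id).const_mul_atTop hb)
    simpa using (tendsto_exp_atBot.comp hlin).const_mul (u T - L₁)
  filter_upwards [hdecay.eventually_const_lt (show L' - L₁ < 0 by linarith),
    eventually_ge_atTop T] with t hsmall ht
  have := add_mul_exp_le_of_linear_le_deriv (fun s hs ↦ (hT s hs).1) (fun s hs ↦ (hT s hs).2) ht
  linarith

theorem limsupAtTopLE_of_hasDerivAt_relax {g : ℝ → ℝ} (hb : 0 < b)
    (hu : ∀ᶠ t in atTop, HasDerivAt u (b * (g t - u t)) t) (hg : LimsupAtTopLE g L) :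
    LimsupAtTopLE u L := by
  have hneg : LiminfAtTopGE (fun t ↦ -u t) (-L) := by
    refine liminfAtTopGE_of_linear_le_deriv hb (hu.mono fun t ht ↦ ht.neg) fun L' hL' ↦ ?_
    filter_upwards [hg (-L') (by linarith)] with t ht
    nlinarith
  intro L' hL'
  filter_upwards [hneg (-L') (by linarith)] with t ht
  linarith

end Comparison

theorem pos_of_hasDerivAt_mul_self {x g : ℝ → ℝ} {a : ℝ}
    (hx : ∀ t ≥ a, HasDerivAt x (x t * g t) t) (hg : ContinuousOn g (Ici a)) (ha : 0 < x a) :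
    ∀ t ≥ a, 0 < x t := by
  by_contra! ⟨t₁, ht₁, hxt₁⟩
  obtain ⟨c, hc, hxc⟩ := intermediate_value_Icc' ht₁
    (fun t ht ↦ (hx t ht.1).continuousAt.continuousWithinAt)
    (show (0 : ℝ) ∈ Icc (x t₁) (x a) from ⟨hxt₁, ha.le⟩)
  obtain ⟨C, hC⟩ := isCompact_Icc.exists_bound_of_continuousOn
    (hg.mono (Icc_subset_Ici_self : Icc a c ⊆ Ici a))
  -- Run time backwards from the zero `c`: `s ↦ x (c - s)` vanishes at `0` and solves a linear ODE.
  have hrev : ∀ s ∈ Icc 0 (c - a),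
      HasDerivAt (fun s ↦ x (c - s)) (-(x (c - s) * g (c - s))) s := by
    intro s hs
    exact ((hx (c - s) (by linarith [hs.2])).comp s ((hasDerivAt_id s).const_sub c)).congr_deriv
      (by ring)
  have hzero := eq_zero_of_abs_deriv_le_mul_abs_self_of_eq_zero_right (K := C)
    (fun s hs ↦ (hrev s hs).continuousAt.continuousWithinAt)
    (fun s hs ↦ (hrev s (Ico_subset_Icc_self hs)).hasDerivWithinAt) (by simpa using hxc)
    (fun s hs ↦ by
      rw [norm_neg, norm_mul, mul_comm]
      exact mul_le_mul_of_nonneg_right (hC _ ⟨by linarith [hs.2], by linarith [hs.1]⟩)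
        (norm_nonneg _))
    (c - a) ⟨by linarith [hc.1], le_rfl⟩
  simp only [sub_sub_cancel] at hzero
  exact ha.ne' hzero

section System

variable {k k₃ k₅ : ℝ} {x y z : ℝ → ℝ}

theorem liminfAtTopGE_z_div_x (hk₅ : 0 < k + k₅)
    (hx : ∀ᶠ t in atTop, HasDerivAt x (k * x t - x t * y t) t)
    (hz : ∀ᶠ t in atTop, HasDerivAt z (k₅ * (x t - z t)) t)
    (hxpos : ∀ᶠ t in atTop, 0 < x t) (hyn : ∀ᶠ t in atTop, 0 ≤ y t)
    (hzn : ∀ᶠ t in atTop, 0 ≤ z t) :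
    LiminfAtTopGE (fun t ↦ z t / x t) (k₅ / (k + k₅)) := by
  refine liminfAtTopGE_of_linear_le_deriv hk₅
    (u' := fun t ↦ (k₅ * (x t - z t) * x t - z t * (k * x t - x t * y t)) / x t ^ 2) ?_
    fun A' hA' ↦ ?_
  · filter_upwards [hx, hz, hxpos] with t hxt hzt hxpt
    exact hzt.div hxt hxpt.ne'
  · filter_upwards [hxpos, hyn, hzn] with t hxt hyt hzt
    have key : (k₅ * (x t - z t) * x t - z t * (k * x t - x t * y t)) / x t ^ 2
        = (k + k₅) * (k₅ / (k + k₅) - z t / x t) + z t * y t / x t := by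
      field_simp
      ring
    rw [key]
    have : 0 ≤ z t * y t / x t := by positivity
    nlinarith

theorem LiminfAtTopGE.y_div_x {A : ℝ} (hk₃ : 0 < k₃) (hkk₃ : 0 < k + k₃)
    (hw : LiminfAtTopGE (fun t ↦ z t / x t) A)
    (hx : ∀ᶠ t in atTop, HasDerivAt x (k * x t - x t * y t) t)
    (hy : ∀ᶠ t in atTop, HasDerivAt y (k₃ * (z t - y t)) t)
    (hxpos : ∀ᶠ t in atTop, 0 < x t) :
    LiminfAtTopGE (fun t ↦ y t / x t) (k₃ * A / (k + k₃)) := by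
  refine liminfAtTopGE_of_linear_le_deriv hkk₃
    (u' := fun t ↦ (k₃ * (z t - y t) * x t - y t * (k * x t - x t * y t)) / x t ^ 2) ?_
    fun B' hB' ↦ ?_
  · filter_upwards [hx, hy, hxpos] with t hxt hyt hxpt
    exact hyt.div hxt hxpt.ne'
  · have hA' : B' * (k + k₃) / k₃ < A := by
      rw [div_lt_iff₀ hk₃]
      rw [lt_div_iff₀ hkk₃] at hB'
      linarith
    filter_upwards [hw _ hA', hxpos] with t hwt hxt
    have key : (k₃ * (z t - y t) * x t - y t * (k * x t - x t * y t)) / x t ^ 2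
        = (k + k₃) * (B' - y t / x t) + k₃ * (z t / x t - B' * (k + k₃) / k₃)
          + y t ^ 2 / x t := by
      field_simp
      ring
    rw [key]
    have : 0 ≤ y t ^ 2 / x t := by positivity
    nlinarith

theorem LiminfAtTopGE.inv_x {B : ℝ} (hk : 0 < k) (hv : LiminfAtTopGE (fun t ↦ y t / x t) B)
    (hx : ∀ᶠ t in atTop, HasDerivAt x (k * x t - x t * y t) t)
    (hxpos : ∀ᶠ t in atTop, 0 < x t) :
    LiminfAtTopGE (fun t ↦ (x t)⁻¹) (B / k) := by
  refine liminfAtTopGE_of_linear_le_deriv hk (u' := fun t ↦ -(k * x t - x t * y t) / x t ^ 2) ?_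
    fun C' hC' ↦ ?_
  · filter_upwards [hx, hxpos] with t hxt hxpt
    exact hxt.inv hxpt.ne'
  · have hB' : k * C' < B := by rwa [lt_div_iff₀ hk, mul_comm] at hC'
    filter_upwards [hv _ hB', hxpos] with t hvt hxt
    have key : -(k * x t - x t * y t) / x t ^ 2 = k * (C' - (x t)⁻¹) + (y t / x t - k * C') := by
      field_simp
      ring
    rw [key]
    linarith

end System

/-- If `k > 0`, every solution with nonnegative initial data and `x(0) > 0` satisfies
`limsup x ≤ M`, `limsup z ≤ M`, `limsup y ≤ M`, where `M = k(k+k₅)(k+k₃)/(k₃k₅)`. -/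
theorem stmt_13 (k k₃ k₅ : ℝ) (hk : 0 < k) (hk₃ : 0 < k₃) (hk₅ : 0 < k₅)
    (x y z : ℝ → ℝ)
    (hx : ∀ t ≥ (0 : ℝ), HasDerivAt x (k * x t - x t * y t) t)
    (hy : ∀ t ≥ (0 : ℝ), HasDerivAt y (k₃ * (z t - y t)) t)
    (hz : ∀ t ≥ (0 : ℝ), HasDerivAt z (k₅ * (x t - z t)) t)
    (hx0 : 0 < x 0) (hy0 : 0 ≤ y 0) (hz0 : 0 ≤ z 0) :
    limsup x atTop ≤ k * (k + k₅) * (k + k₃) / (k₃ * k₅) ∧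
    limsup z atTop ≤ k * (k + k₅) * (k + k₃) / (k₃ * k₅) ∧
    limsup y atTop ≤ k * (k + k₅) * (k + k₃) / (k₃ * k₅) := by
  have hxpos : ∀ t ≥ (0 : ℝ), 0 < x t := pos_of_hasDerivAt_mul_self (g := fun t ↦ k - y t)
    (fun t ht ↦ (hx t ht).congr_deriv (by ring))
    (continuousOn_const.sub fun t ht ↦ (hy t ht).continuousAt.continuousWithinAt) hx0
  have hzn := nonneg_of_hasDerivAt_relax hk₅.le hz (fun t ht ↦ (hxpos t ht).le) hz0
  have hyn := nonneg_of_hasDerivAt_relax hk₃.le hy hzn hy0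
  have hx' := eventually_atTop.2 ⟨0, hx⟩
  have hy' := eventually_atTop.2 ⟨0, hy⟩
  have hz' := eventually_atTop.2 ⟨0, hz⟩
  have hxpos' := eventually_atTop.2 ⟨0, hxpos⟩
  have hyn' := eventually_atTop.2 ⟨0, hyn⟩
  have hzn' := eventually_atTop.2 ⟨0, hzn⟩
  have hw := liminfAtTopGE_z_div_x (by positivity) hx' hz' hxpos' hyn' hzn'
  have hv := hw.y_div_x hk₃ (by positivity) hx' hy' hxpos'
  have hxM : LimsupAtTopLE x (k * (k + k₅) * (k + k₃) / (k₃ * k₅)) := by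
    convert (hv.inv_x hk hx' hxpos').limsupAtTopLE_inv (by positivity) hxpos' using 1
    field_simp
  have hzM := limsupAtTopLE_of_hasDerivAt_relax hk₅ hz' hxM
  have hyM := limsupAtTopLE_of_hasDerivAt_relax hk₃ hy' hzM
  exact ⟨hxM.limsup_le (hxpos'.mono fun _ ↦ le_of_lt), hzM.limsup_le hzn', hyM.limsup_le hyn'⟩
end
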